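/- Let E be a real normed vector space with its Borel σ-algebra, μ a probability measure on E, and A, B disjoint measurable subsets with μ(A) + μ(B) = 1. Let T : E → E be measurable with (μ restricted to A) pushed forward by T equal to μ restricted to B. Let ρ, α : E → ℝ be μ-integrable and assume for every x ∈ A that ρ(x) + ρ(T x) = ‖T x − x‖ · α(x) and α(T x) = α(x). Then (a) ∫ ρ dμ = ∫_A ‖T x − x‖ · α(x) dμ(x), and (b) ∫ α dμ = 2 · ∫_A α dμ. (The two integral identities established in the proof of Theorem 2.) -/

import Mathlib

open MeasureTheory

/-!
Up to a null set `E` is the disjoint union of `A` and `B`, and `T` carries `μ|_A` onto `μ|_B`, so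
`∫ f dμ = ∫_A f dμ + ∫_B f dμ = ∫_A (f x + f (T x)) dμ(x)` for every integrable `f`. For `f = ρ`
the integrand on the right is `‖T x - x‖ · α x` by the pairing identity; for `f = α` it is `2 α x`.
-/

section PairedSets

variable {X G : Type*} [MeasurableSpace X] [NormedAddCommGroup G]
  {μ : Measure X} {A B : Set X} {T : X → X} {f : X → G}

theorem ae_mem_union_of_measure_add_eq_one [IsProbabilityMeasure μ] (hA : MeasurableSet A)
    (hB : MeasurableSet B) (hdisj : Disjoint A B) (hAB : μ A + μ B = 1) :
    ∀ᵐ x ∂μ, x ∈ A ∪ B :=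
  ae_iff.mpr <| (prob_compl_eq_zero_iff (hA.union hB)).mpr <| by
    rw [measure_union hdisj hB, hAB]

theorem integral_eq_setIntegral_add_setIntegral_of_ae_mem_union [NormedSpace ℝ G]
    (hB : MeasurableSet B) (hdisj : Disjoint A B) (hAB : ∀ᵐ x ∂μ, x ∈ A ∪ B) (hf : Integrable f μ) :
    ∫ x, f x ∂μ = ∫ x in A, f x ∂μ + ∫ x in B, f x ∂μ := by
  rw [← setIntegral_union hdisj hB hf.integrableOn hf.integrableOn,
    Measure.restrict_eq_self_of_ae_mem hAB]

theorem setIntegral_eq_setIntegral_comp_of_map_restrict [NormedSpace ℝ G]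
    (hT : AEMeasurable T (μ.restrict A))
    (hmap : (μ.restrict A).map T = μ.restrict B) (hf : AEStronglyMeasurable f (μ.restrict B)) :
    ∫ x in B, f x ∂μ = ∫ x in A, f (T x) ∂μ := by
  rw [← hmap] at hf ⊢
  exact integral_map hT hf

theorem IntegrableOn.comp_of_map_restrict (hT : AEMeasurable T (μ.restrict A))
    (hmap : (μ.restrict A).map T = μ.restrict B) (hf : IntegrableOn f B μ) :
    IntegrableOn (fun x ↦ f (T x)) A μ := by
  rw [IntegrableOn, ← hmap] at hf
  exact (integrable_map_measure hf.aestronglyMeasurable hT).mp hf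

theorem integral_eq_setIntegral_add_comp [NormedSpace ℝ G] [IsProbabilityMeasure μ]
    (hA : MeasurableSet A) (hB : MeasurableSet B) (hdisj : Disjoint A B) (hAB : μ A + μ B = 1)
    (hT : AEMeasurable T (μ.restrict A)) (hmap : (μ.restrict A).map T = μ.restrict B)
    (hf : Integrable f μ) :
    ∫ x, f x ∂μ = ∫ x in A, (f x + f (T x)) ∂μ := by
  rw [integral_eq_setIntegral_add_setIntegral_of_ae_mem_union hB hdisj
      (ae_mem_union_of_measure_add_eq_one hA hB hdisj hAB) hf,
    setIntegral_eq_setIntegral_comp_of_map_restrict hT hmap hf.aestronglyMeasurable.restrict]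
  exact (integral_add hf.integrableOn
    (IntegrableOn.comp_of_map_restrict hT hmap hf.integrableOn)).symm

end PairedSets

theorem theorem2_integral_identities_general {E : Type*} [NormedAddCommGroup E]
    [MeasurableSpace E]
    (μ : Measure E) [IsProbabilityMeasure μ]
    (A B : Set E) (hA : MeasurableSet A) (hB : MeasurableSet B)
    (hdisj : Disjoint A B) (hAB : μ A + μ B = 1)
    (T : E → E) (hT : Measurable T)
    (hmap : Measure.map T (μ.restrict A) = μ.restrict B)
    (ρ α : E → ℝ) (hρ : Integrable ρ μ) (hα : Integrable α μ)
    (hpair : ∀ x ∈ A, ρ x + ρ (T x) = ‖T x - x‖ * α x)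
    (hαT : ∀ x ∈ A, α (T x) = α x) :
    (∫ x, ρ x ∂μ = ∫ x in A, ‖T x - x‖ * α x ∂μ) ∧
    (∫ x, α x ∂μ = 2 * ∫ x in A, α x ∂μ) := by
  constructor
  · rw [integral_eq_setIntegral_add_comp hA hB hdisj hAB hT.aemeasurable hmap hρ]
    exact setIntegral_congr_fun hA hpair
  · rw [integral_eq_setIntegral_add_comp hA hB hdisj hAB hT.aemeasurable hmap hα,
      ← integral_const_mul]
    refine setIntegral_congr_fun hA fun x hx ↦ ?_
    rw [hαT x hx, two_mul]

/-- The two integral identities established in the proof of Theorem 2: under a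
measure-preserving pairing `T` between the class supports `A` and `B` with
`ρ x + ρ (T x) = ‖T x − x‖ · α x` and `α (T x) = α x` on `A`,
(a) `∫ ρ dμ = ∫_A ‖T x − x‖ · α x dμ(x)` and (b) `∫ α dμ = 2 · ∫_A α dμ`. -/
theorem theorem2_integral_identities {E : Type*} [NormedAddCommGroup E] [NormedSpace ℝ E]
    [MeasurableSpace E] [BorelSpace E]
    (μ : Measure E) [IsProbabilityMeasure μ]
    (A B : Set E) (hA : MeasurableSet A) (hB : MeasurableSet B)
    (hdisj : Disjoint A B) (hAB : μ A + μ B = 1)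
    (T : E → E) (hT : Measurable T)
    (hmap : Measure.map T (μ.restrict A) = μ.restrict B)
    (ρ α : E → ℝ) (hρ : Integrable ρ μ) (hα : Integrable α μ)
    (hpair : ∀ x ∈ A, ρ x + ρ (T x) = ‖T x - x‖ * α x)
    (hαT : ∀ x ∈ A, α (T x) = α x) :
    (∫ x, ρ x ∂μ = ∫ x in A, ‖T x - x‖ * α x ∂μ) ∧
    (∫ x, α x ∂μ = 2 * ∫ x in A, α x ∂μ) :=
  theorem2_integral_identities_general μ A B hA hB hdisj hAB T hT hmap ρ α hρ hα hpair hαT
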